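/- arXiv:2004.05563 — 3 statements merged into one kernel-verified Lean document; each statement's English description precedes it below -/
import Mathlib

section
/- Let r, c, d be positive integers with r ≥ c·d, and let Y_1, …, Y_r be independent real random variables, each taking values in [0,1], such that for every i and every t ∈ [0,1], P[Y_i > t] ≤ β̃·(1−t) (which holds in particular if each Y_i has a density bounded above by β̃). Then P[Y_1 + ⋯ + Y_r ≥ r − c] ≤ 2^r · (β̃/d)^{r − c·d}. -/
/-!
If `Y₁ + ⋯ + Yᵣ ≥ r - c` with every `Yᵢ ≤ 1`, then the deficits `1 - Yᵢ` sum to at most `c`, so at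
most `c d` indices have `Yᵢ ≤ 1 - 1/d`. Hence some set `S` of at most `c d` indices has
`Yᵢ > 1 - 1/d` for every `i ∉ S`; by independence each such `S` has probability at most
`(β/d)^(r - c d)`, and there are at most `2^r` sets `S`.
-/

open MeasureTheory ProbabilityTheory Finset

lemma mul_card_filter_le_of_card_sub_le_sum {ι : Type*} [Fintype ι] {y : ι → ℝ}
    (hy : ∀ i, y i ≤ 1) {a : ℝ} (hsum : Fintype.card ι - a ≤ ∑ i, y i) (ε : ℝ) :
    ε * #{i | y i ≤ 1 - ε} ≤ a :=
  calc ε * #{i | y i ≤ 1 - ε} = ∑ _i ∈ {i | y i ≤ 1 - ε}, ε := by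
        rw [sum_const, nsmul_eq_mul, mul_comm]
    _ ≤ ∑ i ∈ {i | y i ≤ 1 - ε}, (1 - y i) :=
        sum_le_sum fun i hi => by linarith [(mem_filter.1 hi).2]
    _ ≤ ∑ i, (1 - y i) :=
        sum_le_sum_of_subset_of_nonneg (subset_univ _) fun i _ _ => by linarith [hy i]
    _ = Fintype.card ι - ∑ i, y i := by simp [sum_sub_distrib]
    _ ≤ a := by linarith

lemma card_filter_le_one_sub_one_div_le_mul {ι : Type*} [Fintype ι] {y : ι → ℝ}
    (hy : ∀ i, y i ≤ 1) {c d : ℕ} (hd : 0 < d) (hsum : (Fintype.card ι : ℝ) - c ≤ ∑ i, y i) :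
    #{i | y i ≤ 1 - 1 / d} ≤ c * d := by
  have hd' : (0 : ℝ) < d := by exact_mod_cast hd
  have h := mul_card_filter_le_of_card_sub_le_sum hy hsum (1 / d)
  rw [one_div, inv_mul_le_iff₀ hd'] at h
  rw [one_div]
  exact_mod_cast h.trans_eq (mul_comm _ _)

namespace ProbabilityTheory.iIndepFun

variable {Ω ι : Type*} [MeasurableSpace Ω] {μ : Measure Ω} {β : ι → Type*}
  [∀ i, MeasurableSpace (β i)] {Y : ∀ i, Ω → β i} {s : ∀ i, Set (β i)} {q : ENNReal}

lemma measure_biInter_preimage_le_pow (hindep : iIndepFun Y μ) (hs : ∀ i, MeasurableSet (s i))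
    (hq : ∀ i, μ (Y i ⁻¹' s i) ≤ q) (T : Finset ι) :
    μ (⋂ i ∈ T, Y i ⁻¹' s i) ≤ q ^ #T := by
  rw [hindep.measure_inter_preimage_eq_mul T fun i _ => hs i]
  exact (prod_le_prod' fun i _ => hq i).trans_eq (prod_const q)

open Classical in
lemma measure_card_filter_notMem_le [Fintype ι] (hindep : iIndepFun Y μ)
    (hs : ∀ i, MeasurableSet (s i)) (hq : ∀ i, μ (Y i ⁻¹' s i) ≤ q) (hq1 : q ≤ 1) (k : ℕ) :
    μ {ω | #{i | Y i ω ∉ s i} ≤ k} ≤ 2 ^ Fintype.card ι * q ^ (Fintype.card ι - k) := by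
  let F : Finset (Finset ι) := {S | #S ≤ k}
  have hcover : {ω | #{i | Y i ω ∉ s i} ≤ k} ⊆ ⋃ S ∈ F, ⋂ i ∈ Sᶜ, Y i ⁻¹' s i :=
    fun ω hω => Set.mem_biUnion (x := ({i | Y i ω ∉ s i} : Finset ι)) (by simpa [F] using hω)
      (by simp)
  have hF : #F ≤ 2 ^ Fintype.card ι := by
    simpa using card_filter_le (univ : Finset (Finset ι)) _
  have hS : ∀ S ∈ F, μ (⋂ i ∈ Sᶜ, Y i ⁻¹' s i) ≤ q ^ (Fintype.card ι - k) := fun S hSF =>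
    (hindep.measure_biInter_preimage_le_pow hs hq Sᶜ).trans <|
      pow_le_pow_right_of_le_one' hq1 <| by
        rw [card_compl]; exact Nat.sub_le_sub_left (mem_filter.1 hSF).2 _
  calc μ {ω | #{i | Y i ω ∉ s i} ≤ k}
      ≤ ∑ S ∈ F, μ (⋂ i ∈ Sᶜ, Y i ⁻¹' s i) := (measure_mono hcover).trans
        (measure_biUnion_finset_le F _)
    _ ≤ #F * q ^ (Fintype.card ι - k) := by
        simpa [sum_const, nsmul_eq_mul] using sum_le_sum hS
    _ ≤ 2 ^ Fintype.card ι * q ^ (Fintype.card ι - k) := by gcongr; exact_mod_cast hF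

end ProbabilityTheory.iIndepFun

theorem stmt1_general {Ω : Type*} [MeasurableSpace Ω] (μ : Measure Ω) [IsProbabilityMeasure μ]
    (r c d : ℕ) (hd : 0 < d)
    (β : ℝ) (hβ : 0 < β)
    (Y : Fin r → Ω → ℝ)
    (hrange : ∀ i ω, Y i ω ∈ Set.Icc (0:ℝ) 1)
    (hindep : iIndepFun Y μ)
    (htail : ∀ i, ∀ t ∈ Set.Icc (0:ℝ) 1,
      μ {ω | t < Y i ω} ≤ ENNReal.ofReal (β * (1 - t))) :
    μ {ω | (r : ℝ) - c ≤ ∑ i, Y i ω} ≤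
      ENNReal.ofReal (2 ^ r * (β / d) ^ (r - c * d)) := by
  have hd' : (1 : ℝ) ≤ d := by exact_mod_cast hd
  rcases le_or_gt 1 (β / d) with hβd | hβd
  · exact prob_le_one.trans <| ENNReal.one_le_ofReal.2 <|
      one_le_mul_of_one_le_of_one_le (one_le_pow₀ one_le_two) (one_le_pow₀ hβd)
  have ht : 1 - 1 / (d : ℝ) ∈ Set.Icc (0 : ℝ) 1 := by
    have := div_le_one_of_le₀ hd' (by positivity)
    have := one_div_pos.2 (zero_lt_one.trans_le hd')
    constructor <;> linarith
  have hq : ∀ i, μ (Y i ⁻¹' Set.Ioi (1 - 1 / d)) ≤ ENNReal.ofReal (β / d) := fun i =>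
    (htail i _ ht).trans_eq (by rw [sub_sub_cancel, mul_one_div])
  calc μ {ω | (r : ℝ) - c ≤ ∑ i, Y i ω}
      ≤ μ {ω | #{i | Y i ω ∉ Set.Ioi (1 - 1 / (d : ℝ))} ≤ c * d} := measure_mono fun ω hω => by
        simpa using card_filter_le_one_sub_one_div_le_mul (fun i => (hrange i ω).2) hd
          (by simpa using hω)
    _ ≤ 2 ^ r * ENNReal.ofReal (β / d) ^ (r - c * d) := by
        simpa using hindep.measure_card_filter_notMem_le (fun _ => measurableSet_Ioi) hq
          (ENNReal.ofReal_le_one.2 hβd.le) (c * d)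
    _ = ENNReal.ofReal (2 ^ r * (β / d) ^ (r - c * d)) := by
        rw [ENNReal.ofReal_mul (by positivity), ENNReal.ofReal_pow zero_le_two,
          ENNReal.ofReal_pow (by positivity), ENNReal.ofReal_ofNat]

/-- concentration for sums of independent `[0,1]`-valued random variables
whose upper tails satisfy `P[Y_i > t] ≤ β(1-t)`. -/
theorem stmt1 {Ω : Type*} [MeasurableSpace Ω] (μ : Measure Ω) [IsProbabilityMeasure μ]
    (r c d : ℕ) (hr : 0 < r) (hc : 0 < c) (hd : 0 < d) (hrcd : c * d ≤ r)
    (β : ℝ) (hβ : 0 < β)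
    (Y : Fin r → Ω → ℝ)
    (hmeas : ∀ i, Measurable (Y i))
    (hrange : ∀ i ω, Y i ω ∈ Set.Icc (0:ℝ) 1)
    (hindep : iIndepFun Y μ)
    (htail : ∀ i, ∀ t ∈ Set.Icc (0:ℝ) 1,
      μ {ω | t < Y i ω} ≤ ENNReal.ofReal (β * (1 - t))) :
    μ {ω | (r : ℝ) - c ≤ ∑ i, Y i ω} ≤
      ENNReal.ofReal (2 ^ r * (β / d) ^ (r - c * d)) :=
  stmt1_general μ r c d hd β hβ Y hrange hindep htail
end

section
/- Let 0 < α ≤ β, let T ≥ 1 and s_1, …, s_T be positive integers with s := min{s_1,…,s_T}, and let p ∈ (0,1). Consider random variables X_0 = 1 and X_1, …, X_T generated so that, conditioned on X_t, the ratio of a single fresh sample Z to X_t satisfies P[Z/X_t < 1 − u] ≤ 1 − (α/β)·u for all u ∈ [0, α/β·(β/α)] = [0,1], and X_{t+1} is the maximum of s_{t+1} independent such samples Z. Assume additionally 1 − (β/α)·(T·ln(T/p))/s ≥ 0. Then P[X_T ≥ 1 − (β/α)·(T·ln(T/p))/s] ≥ 1 − p. -/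
/-!
Put `u = (β/α)·ln(T/p)/s`. A single step fails to satisfy `X_{t+1} ≥ (1 - u)·X_t` with
probability at most `(1 - ln(T/p)/s)^{s_{t+1}} ≤ exp(-ln(T/p)) = p/T`, so by the union bound all
`T` steps succeed with probability at least `1 - p`, and then Bernoulli's inequality gives
`X_T ≥ (1 - u)^T ≥ 1 - T·u`.
-/

open MeasureTheory Finset

lemma pow_mul_le_of_forall_mul_le_succ {x : ℕ → ℝ} {c : ℝ} (hc : 0 ≤ c) {n : ℕ}
    (h : ∀ t < n, c * x t ≤ x (t + 1)) : c ^ n * x 0 ≤ x n := by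
  induction n with
  | zero => simp
  | succ n ih =>
    calc c ^ (n + 1) * x 0 = c * (c ^ n * x 0) := by ring
      _ ≤ c * x n := by gcongr; exact ih fun t ht ↦ h t (by omega)
      _ ≤ x (n + 1) := h n n.lt_succ_self

lemma one_sub_mul_le_of_forall_mul_le_succ {x : ℕ → ℝ} {u : ℝ} (hu : u ≤ 1) (hx0 : x 0 = 1)
    {n : ℕ} (h : ∀ t < n, (1 - u) * x t ≤ x (t + 1)) : 1 - n * u ≤ x n :=
  calc 1 - n * u = 1 + n * (-u) := by ring
    _ ≤ (1 + -u) ^ n := one_add_mul_le_pow (by linarith) n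
    _ = (1 - u) ^ n * x 0 := by rw [hx0, mul_one, ← sub_eq_add_neg]
    _ ≤ x n := pow_mul_le_of_forall_mul_le_succ (by linarith) h

lemma one_sub_div_pow_le_exp_neg_of_le {x : ℝ} {n k : ℕ} (hx : 0 ≤ x) (hxn : x ≤ n)
    (hnk : n ≤ k) : (1 - x / n) ^ k ≤ Real.exp (-x) := by
  have hdiv : x / n ≤ 1 := div_le_one_of_le₀ hxn n.cast_nonneg
  calc (1 - x / n) ^ k ≤ (1 - x / n) ^ n :=
        pow_le_pow_of_le_one (by linarith) (by linarith [div_nonneg hx n.cast_nonneg]) hnk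
    _ ≤ Real.exp (-x) := Real.one_sub_div_pow_le_exp_neg hxn

lemma one_sub_log_div_pow_le_div {a b : ℝ} (ha : 0 < a) (hab : a ≤ b) {n k : ℕ}
    (hn : Real.log (b / a) ≤ n) (hnk : n ≤ k) : (1 - Real.log (b / a) / n) ^ k ≤ a / b := by
  have hba : 1 ≤ b / a := (one_le_div ha).mpr hab
  calc (1 - Real.log (b / a) / n) ^ k ≤ Real.exp (-Real.log (b / a)) :=
        one_sub_div_pow_le_exp_neg_of_le (Real.log_nonneg hba) hn hnk
    _ = a / b := by rw [Real.exp_neg, Real.exp_log (by linarith), inv_div]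

section Measure

variable {Ω : Type*} [MeasurableSpace Ω] {μ : Measure Ω}

lemma measure_biUnion_range_le_mul {A : ℕ → Set Ω} {n : ℕ} {ε : ENNReal}
    (h : ∀ t < n, μ (A t) ≤ ε) : μ (⋃ t ∈ range n, A t) ≤ n * ε :=
  calc μ (⋃ t ∈ range n, A t) ≤ ∑ t ∈ range n, μ (A t) := measure_biUnion_finset_le _ _
    _ ≤ #(range n) • ε := sum_le_card_nsmul _ _ _ fun t ht ↦ h t (mem_range.mp ht)
    _ = n * ε := by rw [card_range, nsmul_eq_mul]

variable [IsProbabilityMeasure μ]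

lemma one_sub_le_measure_compl {B : Set Ω} {ε : ENNReal} (hB : μ B ≤ ε) : 1 - ε ≤ μ Bᶜ :=
  calc 1 - ε ≤ 1 - μ B := tsub_le_tsub_left hB 1
    _ ≤ μ Bᶜ := tsub_le_iff_left.mpr (measure_univ (μ := μ) ▸ measure_univ_le_add_compl B)

lemma one_sub_mul_le_measure_one_sub_mul_le {X : ℕ → Ω → ℝ} (hX0 : ∀ ω, X 0 ω = 1) {u : ℝ}
    (hu : u ≤ 1) {n : ℕ} {ε : ENNReal}
    (h : ∀ t < n, μ {ω | X (t + 1) ω < (1 - u) * X t ω} ≤ ε) :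
    1 - n * ε ≤ μ {ω | 1 - n * u ≤ X n ω} := by
  refine (one_sub_le_measure_compl (measure_biUnion_range_le_mul h)).trans (measure_mono ?_)
  intro ω hω
  simp only [Set.compl_iUnion, Set.mem_iInter, Set.mem_compl_iff, Set.mem_ofPred_eq, not_lt,
    mem_range] at hω
  exact one_sub_mul_le_of_forall_mul_le_succ hu (hX0 ω) hω

end Measure

theorem stmt3_general {Ω : Type*} [MeasurableSpace Ω] (μ : Measure Ω) [IsProbabilityMeasure μ]
    (α β : ℝ) (hα : 0 < α) (hαβ : α ≤ β)
    (T : ℕ) (hT : 0 < T) (s : ℕ → ℕ)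
    (smin : ℕ) (hsminpos : 0 < smin) (hsmin : ∀ t, 1 ≤ t → t ≤ T → smin ≤ s t)
    (p : ℝ) (hp : p ∈ Set.Ioo (0:ℝ) 1)
    (X : ℕ → Ω → ℝ) (hX0 : ∀ ω, X 0 ω = 1)
    (hstep : ∀ t < T, ∀ u ∈ Set.Icc (0:ℝ) 1,
      μ {ω | X (t + 1) ω < (1 - u) * X t ω} ≤
        ENNReal.ofReal ((1 - (α / β) * u) ^ s (t + 1)))
    (hnn : 0 ≤ 1 - (β / α) * ((T : ℝ) * Real.log (T / p)) / smin) :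
    ENNReal.ofReal (1 - p) ≤
      μ {ω | 1 - (β / α) * ((T : ℝ) * Real.log (T / p)) / smin ≤ X T ω} := by
  obtain ⟨hp0, hp1⟩ := hp
  have hβ : 0 < β := hα.trans_le hαβ
  have hT1 : (1 : ℝ) ≤ T := by exact_mod_cast hT
  have hTp : p ≤ T := by linarith
  set L := Real.log (T / p)
  have hL : 0 ≤ L := Real.log_nonneg ((one_le_div hp0).mpr hTp)
  set u := β / α * L / smin
  have hu0 : 0 ≤ u := by positivity
  have hTu : 1 - (β / α) * ((T : ℝ) * L) / smin = 1 - T * u := by ring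
  have hu1 : u ≤ 1 := by nlinarith
  have hαβu : α / β * u = L / smin := by simp only [u]; field_simp
  have hLs : L ≤ smin := by
    have : α / β * u ≤ u := mul_le_of_le_one_left hu0 (div_le_one_of_le₀ hαβ hβ.le)
    rw [hαβu] at this
    exact (div_le_one (by exact_mod_cast hsminpos)).mp (this.trans hu1)
  have hfail : ∀ t < T, μ {ω | X (t + 1) ω < (1 - u) * X t ω} ≤ ENNReal.ofReal (p / T) := by
    intro t ht
    refine (hstep t ht u ⟨hu0, hu1⟩).trans (ENNReal.ofReal_le_ofReal ?_)
    rw [hαβu]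
    exact one_sub_log_div_pow_le_div hp0 hTp hLs (hsmin _ (by omega) ht)
  calc ENNReal.ofReal (1 - p) = 1 - T * ENNReal.ofReal (p / T) := by
        rw [ENNReal.ofReal_sub 1 hp0.le, ENNReal.ofReal_one, ← ENNReal.ofReal_natCast,
          ← ENNReal.ofReal_mul (by positivity), mul_div_cancel₀ _ (by positivity)]
    _ ≤ μ {ω | 1 - T * u ≤ X T ω} := one_sub_mul_le_measure_one_sub_mul_le hX0 hu1 hfail
    _ = _ := by rw [hTu]

/-- the key round-robin lemma.  `X 0 = 1`, and at each step `X (t+1)` is the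
maximum of `s (t+1)` fresh samples whose rescaled value dominates the `(α/β)`-bounded
uniform tail: `P[X_{t+1} < (1-u)·X_t] ≤ (1 − (α/β)u)^{s_{t+1}}` for `u ∈ [0,1]`.
Then `P[X_T ≥ 1 − (β/α)·T·ln(T/p)/s] ≥ 1 − p`. -/
theorem stmt3 {Ω : Type*} [MeasurableSpace Ω] (μ : Measure Ω) [IsProbabilityMeasure μ]
    (α β : ℝ) (hα : 0 < α) (hαβ : α ≤ β)
    (T : ℕ) (hT : 0 < T) (s : ℕ → ℕ) (hs : ∀ t, 1 ≤ t → t ≤ T → 0 < s t)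
    (smin : ℕ) (hsminpos : 0 < smin) (hsmin : ∀ t, 1 ≤ t → t ≤ T → smin ≤ s t)
    (p : ℝ) (hp : p ∈ Set.Ioo (0:ℝ) 1)
    (X : ℕ → Ω → ℝ) (hX0 : ∀ ω, X 0 ω = 1)
    (hstep : ∀ t < T, ∀ u ∈ Set.Icc (0:ℝ) 1,
      μ {ω | X (t + 1) ω < (1 - u) * X t ω} ≤
        ENNReal.ofReal ((1 - (α / β) * u) ^ s (t + 1)))
    (hnn : 0 ≤ 1 - (β / α) * ((T : ℝ) * Real.log (T / p)) / smin) :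
    ENNReal.ofReal (1 - p) ≤
      μ {ω | 1 - (β / α) * ((T : ℝ) * Real.log (T / p)) / smin ≤ X T ω} :=
  stmt3_general μ α β hα hαβ T hT s smin hsminpos hsmin p hp X hX0 hstep hnn
end

section
/- In the setting of the previous statement (maximum-weight assignment ψ with respect to the thresholded weight function, with w(i,ψ(i)) ≥ τ for all i), suppose each of the q agents with the lowest topological rank in the envy graph receives one extra unassigned item, while all other agents receive only ψ(i). Then the resulting allocation is EFX for every agent i whose topological rank exceeds q: for every other agent i' and every item j in i''s bundle, u_i({ψ(i)}) ≥ u_i(M_{i'} \ {j}). -/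
private lemma unused_bound {N M : Type*} [Fintype N] [DecidableEq N] [DecidableEq M]
    (u : N → M → ℝ) (τ : ℝ)
    (ψ : N → M) (hinj : Function.Injective ψ)
    (hτ : ∀ i, τ ≤ u i (ψ i))
    (hmax : ∀ φ : N → M, Function.Injective φ → (∀ i, τ ≤ u i (φ i)) →
      ∑ i, u i (φ i) ≤ ∑ i, u i (ψ i))
    (i : N) (m : M) (hm : ∀ k, m ≠ ψ k) : u i m ≤ u i (ψ i) := by
  by_cases h : τ ≤ u i m
  · set φ := Function.update ψ i m with hφ
    have hφinj : Function.Injective φ := by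
      intro a b hab
      by_cases ha : a = i <;> by_cases hb : b = i
      · rw [ha, hb]
      · exfalso; rw [hφ] at hab
        simp [Function.update, ha, hb] at hab
        exact (hm b) hab
      · exfalso; rw [hφ] at hab
        simp [Function.update, ha, hb] at hab
        exact (hm a) hab.symm
      · rw [hφ] at hab; simp [Function.update, ha, hb] at hab
        exact hinj hab
    have hφτ : ∀ k, τ ≤ u k (φ k) := by
      intro k
      by_cases hk : k = i
      · subst hk; simpa [hφ] using h
      · simpa [hφ, Function.update, hk] using hτ k
    have hle := hmax φ hφinj hφτ
    have hdiff : ∑ k, (u k (φ k) - u k (ψ k)) = u i m - u i (ψ i) := by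
      rw [Finset.sum_eq_single i]
      · simp [hφ]
      · intro b _ hb; simp [hφ, Function.update, hb]
      · intro hi; exact absurd (Finset.mem_univ i) hi
    rw [Finset.sum_sub_distrib] at hdiff
    linarith
  · linarith [hτ i]

/-- after a maximum-weight assignment `ψ` (thresholded weights, all
assigned values at least `τ`), give each of the agents of topological rank `σ ≤ q` in
the envy graph one extra unused item `j i'`; every agent `i` with `σ i > q` (whose
bundle is `{ψ i}`) is EFX with respect to every other agent. -/
theorem stmt10 {N M : Type*} [Fintype N] [DecidableEq M]
    (u : N → M → ℝ) (hu : ∀ i j, 0 ≤ u i j) (τ : ℝ)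
    (ψ : N → M) (hinj : Function.Injective ψ)
    (hτ : ∀ i, τ ≤ u i (ψ i))
    (hmax : ∀ φ : N → M, Function.Injective φ → (∀ i, τ ≤ u i (φ i)) →
      ∑ i, u i (φ i) ≤ ∑ i, u i (ψ i))
    (σ : N → ℕ)
    (hσ : ∀ i i', u i (ψ i) < u i (ψ i') → σ i < σ i')
    (q : ℕ) (j : N → M)
    (hjunused : ∀ i', σ i' ≤ q → ∀ i, j i' ≠ ψ i)
    (B : N → Finset M)
    (hB : ∀ i', B i' = if σ i' ≤ q then {ψ i', j i'} else {ψ i'}) :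
    ∀ i, q < σ i → ∀ i', i' ≠ i → ∀ x ∈ B i',
      ∑ y ∈ (B i').erase x, u i y ≤ u i (ψ i) := by
  classical
  intro i hi i' _ x hx
  rw [hB i'] at hx ⊢
  by_cases hq : σ i' ≤ q
  · simp only [if_pos hq] at hx ⊢
    have hne : j i' ≠ ψ i' := hjunused i' hq i'
    have hψle : u i (ψ i') ≤ u i (ψ i) := by
      by_contra hlt
      push_neg at hlt
      have := hσ i i' hlt
      omega
    have hjle : u i (j i') ≤ u i (ψ i) :=
      unused_bound u τ ψ hinj hτ hmax i (j i') (hjunused i' hq)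
    rcases Finset.mem_insert.mp hx with hx | hx
    · subst hx
      rw [Finset.erase_insert (by simpa using hne.symm)]
      simpa using hjle
    · rw [Finset.mem_singleton] at hx
      subst hx
      rw [Finset.erase_insert_of_ne hne.symm, Finset.erase_singleton]
      simpa using hψle
  · simp only [if_neg hq] at hx ⊢
    rw [Finset.mem_singleton] at hx
    subst hx
    rw [Finset.erase_singleton]
    simpa using hu i (ψ i)
end
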